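/- For all r ≥ 2 and k ≥ 1, there is exactly one permutation π ∈ S_{rk+1} whose inverse is a 2134⋯(r+1)-cluster and which has no peaks; moreover this permutation has exactly k descents. -/

import Mathlib

open scoped Classical

noncomputable section

/-- One-line notation (0-based positions and values) of a permutation of `Fin n`. -/
def ofPerm {n : ℕ} (π : Equiv.Perm (Fin n)) : ℕ → ℕ :=
  fun i => if h : i < n then (π ⟨i, h⟩ : ℕ) else 0

/-- Number of descents of a word of length `n`. -/
def desNum (n : ℕ) (w : ℕ → ℕ) : ℕ :=
  ((Finset.range (n - 1)).filter (fun i => w (i + 1) < w i)).card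

/-- Number of peaks of a word of length `n`. -/
def pkNum (n : ℕ) (w : ℕ → ℕ) : ℕ :=
  ((Finset.Ico 1 (n - 1)).filter (fun i => w (i - 1) < w i ∧ w (i + 1) < w i)).card

/-- Number of left peaks of a word of length `n`. -/
def lpkNum (n : ℕ) (w : ℕ → ℕ) : ℕ :=
  ((Finset.range (n - 1)).filter
    (fun i => (1 ≤ i ∧ w (i - 1) < w i ∧ w (i + 1) < w i) ∨ (i = 0 ∧ w 1 < w 0))).card

/-- A word of length `r*k+1` is a `2134⋯(r+1)`-cluster: in each window of length `r+1`
starting at position `r*j` (`0 ≤ j ≤ k-1`), the second entry is smallest, the first entry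
is second smallest, and the remaining entries increase. -/
def IsCluster (r k : ℕ) (w : ℕ → ℕ) : Prop :=
  ∀ j < k, w (r * j + 1) < w (r * j) ∧ w (r * j) < w (r * j + 2) ∧
    ∀ l, 2 ≤ l → l < r → w (r * j + l) < w (r * j + l + 1)

/-- Permutations of `S_{rk+1}` whose inverse is a `2134⋯(r+1)`-cluster. -/
def clusterSet (r k : ℕ) : Finset (Equiv.Perm (Fin (r * k + 1))) :=
  Finset.univ.filter (fun π => IsCluster r k (ofPerm π⁻¹))

def s0 (r k i : ℕ) : ℕ :=
  if i % r = 1 then k - 1 - i / r else k + i - (i + r - 1) / r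

def Pp (r t : ℕ) : ℕ := r * (t / (r - 1)) + t % (r - 1) + 2

def Qq (r t : ℕ) : ℕ := if t = 0 then 0 else r * (t - 1) + 1

def t0 (r k v : ℕ) : ℕ :=
  if v < k then r * (k - 1 - v) + 1 else if v = k then 0 else Pp r (v - k - 1)

section Arith

lemma md_mod {r : ℕ} (j l : ℕ) (hl : l < r) : (r*j+l) % r = l := by
  rw [Nat.mul_add_mod, Nat.mod_eq_of_lt hl]

lemma md_div {r : ℕ} (j l : ℕ) (hl : l < r) : (r*j+l) / r = j := by
  rw [Nat.mul_add_div (by omega), Nat.div_eq_of_lt hl, Nat.add_zero]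

lemma ceil_eq {r : ℕ} (hr : 2 ≤ r) (j l : ℕ) (h1 : 1 ≤ l) (h2 : l ≤ r) :
    (r*j + l + r - 1)/r = j + 1 := by
  have e : r*j + l + r - 1 = r*(j+1) + (l-1) := by ring_nf; omega
  rw [e, Nat.mul_add_div (by omega), Nat.div_eq_of_lt (by omega), Nat.add_zero]

lemma mod1_ne {r : ℕ} (hr : 2 ≤ r) (j l : ℕ) (h1 : 2 ≤ l) (h2 : l ≤ r) :
    (r*j+l) % r ≠ 1 := by
  rcases eq_or_lt_of_le h2 with h | h
  · have e : r*j + l = r*(j+1) + 0 := by rw [h]; ring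
    rw [e, md_mod]; omega; omega
  · rw [md_mod j l h]; omega

lemma s0_zero {r k : ℕ} (hr : 2 ≤ r) : s0 r k 0 = k := by
  unfold s0
  rw [if_neg (by rw [Nat.zero_mod]; omega)]
  rw [Nat.zero_add, Nat.div_eq_of_lt (by omega)]
  omega

lemma s0_mod1 {r k : ℕ} (hr : 2 ≤ r) (j : ℕ) : s0 r k (r*j+1) = k - 1 - j := by
  unfold s0
  rw [if_pos (md_mod j 1 (by omega)), md_div j 1 (by omega)]

lemma s0_mid {r k : ℕ} (hr : 2 ≤ r) (j l : ℕ) (h1 : 2 ≤ l) (h2 : l ≤ r) :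
    s0 r k (r*j+l) = k + (r*j+l) - (j+1) := by
  unfold s0
  rw [if_neg (mod1_ne hr j l h1 h2), ceil_eq hr j l (by omega) h2]

lemma s0_base {r k : ℕ} (hr : 2 ≤ r) (j : ℕ) :
    s0 r k (r*(j+1)) = k + r*(j+1) - (j+1) := by
  have e : r*(j+1) = r*j + r := by ring
  rw [e, s0_mid hr j r (by omega) le_rfl]

lemma s0_base_ge {r k : ℕ} (hr : 2 ≤ r) (j : ℕ) : k ≤ s0 r k (r*j) := by
  cases j with
  | zero => rw [Nat.mul_zero, s0_zero hr]
  | succ m =>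
    rw [s0_base hr m]
    have : m + 1 ≤ r*(m+1) := Nat.le_mul_of_pos_left (m+1) (by omega)
    omega

lemma Pp_eq {r : ℕ} (hr : 2 ≤ r) (q s : ℕ) (hs : s ≤ r - 2) :
    Pp r ((r-1)*q + s) = r*q + s + 2 := by
  unfold Pp
  rw [Nat.mul_add_div (by omega), Nat.div_eq_of_lt (by omega), Nat.mul_add_mod,
    Nat.mod_eq_of_lt (by omega)]
  simp

lemma Pp_decomp {r : ℕ} (hr : 2 ≤ r) (t : ℕ) :
    ∃ q s, s ≤ r - 2 ∧ t = (r-1)*q + s ∧ Pp r t = r*q + s + 2 := by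
  have hm := Nat.mod_lt t (y := r-1) (by omega)
  refine ⟨t / (r-1), t % (r-1), by omega, (Nat.div_add_mod t (r-1)).symm, ?_⟩
  conv_lhs => rw [← Nat.div_add_mod t (r-1)]
  exact Pp_eq hr _ _ (by omega)

lemma sP {r k : ℕ} (hr : 2 ≤ r) (t : ℕ) : s0 r k (Pp r t) = k + 1 + t := by
  obtain ⟨q, s, hs, ht, hP⟩ := Pp_decomp hr t
  rw [hP, show r*q + s + 2 = r*q + (s+2) by ring,
    s0_mid hr q (s+2) (by omega) (by omega)]
  have h1 : q ≤ r * q := Nat.le_mul_of_pos_left q (by omega)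
  obtain ⟨m, rfl⟩ : ∃ m, r = m + 2 := ⟨r - 2, by omega⟩
  rw [show m+2-1 = m+1 by omega] at ht
  have e : (m+1)*q + q = (m+2)*q := by ring
  omega

lemma Pp_lt {r k : ℕ} (hr : 2 ≤ r) (t : ℕ) (ht : t < r*k - k) : Pp r t ≤ r*k := by
  obtain ⟨q, s, hs, ht', hP⟩ := Pp_decomp hr t
  obtain ⟨m, rfl⟩ : ∃ m, r = m + 2 := ⟨r - 2, by omega⟩
  rw [show m+2-1 = m+1 by omega] at ht'
  have e1 : (m+1)*k + k = (m+2)*k := by ring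
  have hq : q < k := by
    by_contra h
    have : (m+1)*k ≤ (m+1)*q := Nat.mul_le_mul_left _ (by omega)
    omega
  have e2 : (m+2)*q + (m+2) = (m+2)*(q+1) := by ring
  have : (m+2)*(q+1) ≤ (m+2)*k := Nat.mul_le_mul_left _ (by omega)
  omega

lemma Pp_mono {r : ℕ} (hr : 2 ≤ r) (t : ℕ) : Pp r t < Pp r (t+1) := by
  obtain ⟨q, s, hs, ht', hP⟩ := Pp_decomp hr t
  rcases eq_or_lt_of_le hs with h | h
  · have e : t + 1 = (r-1)*(q+1) + 0 := by
      have : (r-1)*(q+1) = (r-1)*q + (r-1) := by ring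
      omega
    rw [hP, e, Pp_eq hr (q+1) 0 (by omega)]
    have : r*(q+1) = r*q + r := by ring
    omega
  · have e : t + 1 = (r-1)*q + (s+1) := by omega
    rw [hP, e, Pp_eq hr q (s+1) (by omega)]
    omega

lemma Pp_mod_ne_one {r : ℕ} (hr : 2 ≤ r) (t : ℕ) : Pp r t % r ≠ 1 := by
  obtain ⟨q, s, hs, ht', hP⟩ := Pp_decomp hr t
  rw [hP, show r*q + s + 2 = r*q + (s+2) by ring]
  exact mod1_ne hr q (s+2) (by omega) (by omega)

lemma Pp_cover {r k : ℕ} (hr : 2 ≤ r) (p : ℕ) (h1 : 1 ≤ p) (h2 : p ≤ r*k)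
    (h3 : p % r ≠ 1) : ∃ t < r*k - k, Pp r t = p := by
  obtain ⟨q, l, hlr, rfl⟩ : ∃ q l, l < r ∧ p = r*q + l :=
    ⟨p / r, p % r, Nat.mod_lt p (by omega), by have := Nat.div_add_mod p r; omega⟩
  rw [md_mod q l hlr] at h3
  obtain ⟨m, rfl⟩ : ∃ m, r = m + 2 := ⟨r - 2, by omega⟩
  have hk1 : 1 ≤ k := by
    rcases Nat.eq_zero_or_pos k with h | h
    · subst h; rw [Nat.mul_zero] at h2; omega
    · exact h
  obtain ⟨k', rfl⟩ : ∃ k', k = k' + 1 := ⟨k - 1, by omega⟩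
  have eN : (m+2)*(k'+1) - (k'+1) = (m+1)*(k'+1) := by
    have : (m+2)*(k'+1) = (m+1)*(k'+1) + (k'+1) := by ring
    omega
  rcases Nat.eq_zero_or_pos l with h0 | h0
  · subst h0
    have hq0 : q ≠ 0 := by rintro rfl; simp at h1
    obtain ⟨q'', rfl⟩ : ∃ q'', q = q'' + 1 := ⟨q - 1, by omega⟩
    have hqk : q'' ≤ k' := by
      by_contra h
      have h5 : (m+2)*(k'+2) ≤ (m+2)*(q''+1) := Nat.mul_le_mul_left _ (by omega)
      have h6 : (m+2)*(k'+1) + (m+2) = (m+2)*(k'+2) := by ring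
      omega
    refine ⟨(m+1)*q'' + m, ?_, ?_⟩
    · rw [eN]
      have h5 : (m+1)*q'' ≤ (m+1)*k' := Nat.mul_le_mul_left _ hqk
      have h6 : (m+1)*k' + (m+1) = (m+1)*(k'+1) := by ring
      omega
    · have h7 := Pp_eq (r := m+2) hr q'' m (by omega)
      rw [show m+2-1 = m+1 by omega] at h7
      rw [h7]
      have h8 : (m+2)*(q''+1) = (m+2)*q'' + (m+2) := by ring
      omega
  · have hl2 : 2 ≤ l := by omega
    have hqk : q ≤ k' := by
      by_contra h
      have h5 : (m+2)*(k'+1) ≤ (m+2)*q := Nat.mul_le_mul_left _ (by omega)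
      omega
    refine ⟨(m+1)*q + (l-2), ?_, ?_⟩
    · rw [eN]
      have h5 : (m+1)*q ≤ (m+1)*k' := Nat.mul_le_mul_left _ hqk
      have h6 : (m+1)*k' + (m+1) = (m+1)*(k'+1) := by ring
      omega
    · have h7 := Pp_eq (r := m+2) hr q (l-2) (by omega)
      rw [show m+2-1 = m+1 by omega] at h7
      rw [h7]
      omega

lemma mod_succ_iff {r : ℕ} (hr : 2 ≤ r) (q : ℕ) : (q+1) % r = 1 ↔ q % r = 0 := by
  have hd := Nat.div_add_mod q r
  have hbr : q % r < r := Nat.mod_lt q (by omega)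
  set a := q / r
  set b := q % r
  constructor
  · intro h
    by_contra hb
    rcases eq_or_lt_of_le (show b + 1 ≤ r by omega) with h2 | h2
    · have e : q + 1 = r*(a+1) + 0 := by
        have : r*(a+1) = r*a + r := by ring
        omega
      rw [e, md_mod] at h
      · omega
      · omega
    · have e : q + 1 = r*a + (b+1) := by omega
      rw [e, md_mod _ _ h2] at h; omega
  · intro h
    have e : q + 1 = r*a + 1 := by omega
    rw [e, md_mod _ _ (by omega)]

end Arith

section Construct

lemma s0_lt {r k : ℕ} (hr : 2 ≤ r) (hk : 1 ≤ k) (i : ℕ) (hi : i < r*k+1) :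
    s0 r k i < r*k+1 := by
  have hkrk : k ≤ r*k := Nat.le_mul_of_pos_left k (by omega)
  rcases Nat.eq_zero_or_pos i with h0 | h0
  · subst h0; rw [s0_zero hr]; omega
  rcases eq_or_ne (i % r) 1 with h1 | h1
  · have hd := Nat.div_add_mod i r
    obtain ⟨j, hj⟩ : ∃ j, i = r*j+1 := ⟨i/r, by omega⟩
    rw [hj, s0_mod1 hr]
    omega
  · obtain ⟨t, ht, rfl⟩ := Pp_cover (k := k) hr i h0 (by omega) h1
    rw [sP hr]
    omega

lemma t0_lt {r k : ℕ} (hr : 2 ≤ r) (hk : 1 ≤ k) (v : ℕ) (hv : v < r*k+1) :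
    t0 r k v < r*k+1 := by
  unfold t0
  obtain ⟨k', rfl⟩ : ∃ k', k = k' + 1 := ⟨k - 1, by omega⟩
  split_ifs with h1 h2
  · have h3 : r*(k'+1-1-v) ≤ r*k' := Nat.mul_le_mul_left _ (by omega)
    have h4 : r*k' + r = r*(k'+1) := by ring
    omega
  · omega
  · have h5 := Pp_lt (k := k'+1) hr (v - (k'+1) - 1) (by omega)
    omega

lemma s0_t0 {r k : ℕ} (hr : 2 ≤ r) (hk : 1 ≤ k) (v : ℕ) (hv : v < r*k+1) :
    s0 r k (t0 r k v) = v := by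
  unfold t0
  split_ifs with h1 h2
  · rw [s0_mod1 hr]; omega
  · rw [s0_zero hr]; omega
  · rw [sP hr]; omega

lemma t0_dec {r k : ℕ} (hr : 2 ≤ r) (v : ℕ) (hv : v < k) :
    t0 r k (v+1) < t0 r k v := by
  unfold t0
  rw [if_pos hv]
  split_ifs with h1 h2
  · have h3 : r*((k-1-(v+1))+1) ≤ r*(k-1-v) := Nat.mul_le_mul_left _ (by omega)
    have h4 : r*((k-1-(v+1))+1) = r*(k-1-(v+1)) + r := by ring
    omega
  · omega
  · omega

lemma Pp_zero {r : ℕ} (hr : 2 ≤ r) : Pp r 0 = 2 := by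
  simp [Pp]

lemma t0_inc {r k : ℕ} (hr : 2 ≤ r) (hk : 1 ≤ k) (v : ℕ) (h1 : k ≤ v)
    (h2 : v + 1 < r*k+1) : t0 r k v < t0 r k (v+1) := by
  unfold t0
  rcases eq_or_lt_of_le h1 with h | h
  · rw [if_neg (by omega), if_pos h.symm, if_neg (by omega), if_neg (by omega)]
    rw [show v + 1 - k - 1 = 0 by omega, Pp_zero hr]
    omega
  · rw [if_neg (by omega), if_neg (by omega), if_neg (by omega), if_neg (by omega)]
    rw [show v + 1 - k - 1 = (v - k - 1) + 1 by omega]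
    exact Pp_mono hr _

lemma exists_perm {r k : ℕ} (hr : 2 ≤ r) (hk : 1 ≤ k) :
    ∃ π : Equiv.Perm (Fin (r*k+1)),
      (∀ p < r*k+1, ofPerm π⁻¹ p = s0 r k p) ∧
      (∀ v < r*k+1, ofPerm π v = t0 r k v) := by
  set n := r*k+1 with hn
  have hnpos : 0 < n := by omega
  let f : Fin n → Fin n := fun i => ⟨s0 r k i, s0_lt hr hk i i.isLt⟩
  have hsurj : Function.Surjective f := by
    intro y
    refine ⟨⟨t0 r k y, t0_lt hr hk y y.isLt⟩, ?_⟩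
    apply Fin.ext
    exact s0_t0 hr hk y y.isLt
  have hbij : Function.Bijective f := Finite.surjective_iff_bijective.mp hsurj
  let e : Equiv.Perm (Fin n) := Equiv.ofBijective f hbij
  refine ⟨e⁻¹, ?_, ?_⟩
  · intro p hp
    rw [inv_inv]
    unfold ofPerm
    rw [dif_pos hp]
    rfl
  · intro v hv
    unfold ofPerm
    rw [dif_pos hv]
    have he : e ⟨t0 r k v, t0_lt hr hk v hv⟩ = ⟨v, hv⟩ := by
      apply Fin.ext
      exact s0_t0 hr hk v hv
    have : e⁻¹ ⟨v, hv⟩ = ⟨t0 r k v, t0_lt hr hk v hv⟩ := by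
      rw [← he]
      simp [Equiv.Perm.inv_def]
    rw [this]

end Construct

section Existence

lemma cluster_of_s0 {r k : ℕ} (hr : 2 ≤ r) (hk : 1 ≤ k) (w : ℕ → ℕ)
    (hw : ∀ p < r*k+1, w p = s0 r k p) : IsCluster r k w := by
  intro j hj
  have hwin : r*j + r ≤ r*k := by
    have : r*(j+1) ≤ r*k := Nat.mul_le_mul_left _ (by omega)
    have : r*(j+1) = r*j + r := by ring
    omega
  have hjr : j ≤ r*j := Nat.le_mul_of_pos_left j (by omega)
  have hb : k ≤ s0 r k (r*j) := s0_base_ge hr j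
  have hbv : s0 r k (r*j) ≤ k + r*j - j := by
    cases j with
    | zero => rw [Nat.mul_zero, s0_zero hr]; omega
    | succ m => rw [s0_base hr m]
  have hbv' : k + r*j - j ≤ s0 r k (r*j) := by
    cases j with
    | zero => rw [Nat.mul_zero, s0_zero hr]; omega
    | succ m => rw [s0_base hr m]
  refine ⟨?_, ?_, ?_⟩
  · rw [hw (r*j+1) (by omega), hw (r*j) (by omega), s0_mod1 hr]
    omega
  · rw [hw (r*j) (by omega), hw (r*j+2) (by omega), s0_mid hr j 2 le_rfl hr]
    omega
  · intro l hl2 hlr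
    rw [hw (r*j+l) (by omega), hw (r*j+l+1) (by omega),
      s0_mid hr j l hl2 (by omega), show r*j+l+1 = r*j+(l+1) by ring,
      s0_mid hr j (l+1) (by omega) (by omega)]
    omega

lemma pk_of_t0 {r k : ℕ} (hr : 2 ≤ r) (hk : 1 ≤ k) (w : ℕ → ℕ)
    (hw : ∀ v < r*k+1, w v = t0 r k v) : pkNum (r*k+1) w = 0 := by
  unfold pkNum
  rw [Finset.card_eq_zero, Finset.filter_eq_empty_iff]
  intro i hi
  rw [Finset.mem_Ico] at hi
  obtain ⟨hi1, hi2⟩ := hi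
  have hirk : i < r*k := by omega
  rintro ⟨h1, h2⟩
  rcases le_or_gt i k with h | h
  · have hd := t0_dec (k := k) hr (v := i-1) (by omega)
    rw [show i - 1 + 1 = i by omega] at hd
    rw [hw (i-1) (by omega), hw i (by omega)] at h1
    omega
  · have hinc := t0_inc hr hk i (by omega) (by omega)
    rw [hw i (by omega), hw (i+1) (by omega)] at h2
    omega

lemma exists_good {r k : ℕ} (hr : 2 ≤ r) (hk : 1 ≤ k) :
    ∃ π : Equiv.Perm (Fin (r*k+1)),
      (∀ p < r*k+1, ofPerm π⁻¹ p = s0 r k p) ∧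
      IsCluster r k (ofPerm π⁻¹) ∧ pkNum (r*k+1) (ofPerm π) = 0 := by
  obtain ⟨π, h1, h2⟩ := exists_perm hr hk
  exact ⟨π, h1, cluster_of_s0 hr hk _ h1, pk_of_t0 hr hk _ h2⟩

end Existence

section Uniqueness

lemma main_words {r k : ℕ} (hr : 2 ≤ r) (hk : 1 ≤ k) (w u : ℕ → ℕ)
    (hw_lt : ∀ p, p < r*k+1 → w p < r*k+1)
    (hu_lt : ∀ p, p < r*k+1 → u p < r*k+1)
    (hwu : ∀ p, p < r*k+1 → w (u p) = p)
    (huw : ∀ p, p < r*k+1 → u (w p) = p)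
    (hC : IsCluster r k u)
    (hpk : ∀ i, 1 ≤ i → i < r*k → ¬(w (i-1) < w i ∧ w (i+1) < w i)) :
    (∀ p, p < r*k+1 → u p = s0 r k p) ∧
    (Finset.range (r*k)).filter (fun i => w (i+1) < w i) = Finset.range k := by
  have hkrk : k ≤ r*k := Nat.le_mul_of_pos_left k (by omega)
  have h2k : 2*k ≤ r*k := Nat.mul_le_mul_right k hr
  have hinj : ∀ a b, a < r*k+1 → b < r*k+1 → w a = w b → a = b := by
    intro a b ha hb h
    have := huw a ha
    rw [h, huw b hb] at this
    exact this.symm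
  -- the valley position
  have hex : ∃ i, i = r*k ∨ w i < w (i+1) := ⟨r*k, Or.inl rfl⟩
  set m := Nat.find hex with hm
  have hmspec : m = r*k ∨ w m < w (m+1) := Nat.find_spec hex
  have hmle : m ≤ r*k := Nat.find_le (Or.inl rfl)
  have hD : ∀ i, i < m → w (i+1) < w i := by
    intro i hi
    have h3 := Nat.find_min hex hi
    push_neg at h3
    obtain ⟨h4, h5⟩ := h3
    have hi2 : i < r*k := by omega
    rcases eq_or_lt_of_le h5 with h6 | h6
    · exact absurd (hinj (i+1) i (by omega) (by omega) h6) (by omega)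
    · exact h6
  have hAsc0 : ∀ d, m + d < r*k → w (m+d) < w (m+d+1) := by
    intro d
    induction d with
    | zero =>
      intro h
      rcases hmspec with h1 | h1
      · omega
      · exact h1
    | succ d ih =>
      intro h
      have ih2 := ih (by omega)
      have h3 := hpk (m+d+1) (by omega) (by omega)
      rw [show m+d+1-1 = m+d by omega] at h3
      rcases lt_or_ge (w (m+d+1)) (w (m+d+1+1)) with h5 | h5
      · exact h5
      · rcases eq_or_lt_of_le h5 with h6 | h6
        · exact absurd (hinj _ _ (by omega) (by omega) h6.symm) (by omega)
        · exact absurd ⟨ih2, h6⟩ h3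
  have hAsc : ∀ i, m ≤ i → i < r*k → w i < w (i+1) := by
    intro i h1 h2
    have := hAsc0 (i - m) (by omega)
    rw [show m + (i-m) = i by omega] at this
    exact this
  have hMonoA : ∀ a b, a < b → b ≤ m → w b < w a := by
    have key : ∀ d a, a + d + 1 ≤ m → w (a+d+1) < w a := by
      intro d
      induction d with
      | zero => intro a h; exact hD a (by omega)
      | succ d ih =>
        intro a h
        have h1 := ih a (by omega)
        have h2 := hD (a+d+1) (by omega)
        exact lt_trans h2 h1
    intro a b hab hbm
    have := key (b - a - 1) a (by omega)
    rw [show a + (b-a-1) + 1 = b by omega] at this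
    exact this
  have hMonoB : ∀ a b, m ≤ a → a < b → b ≤ r*k → w a < w b := by
    have key : ∀ d a, m ≤ a → a + d + 1 ≤ r*k → w a < w (a+d+1) := by
      intro d
      induction d with
      | zero => intro a h1 h2; exact hAsc a h1 (by omega)
      | succ d ih =>
        intro a h1 h2
        have h3 := ih a h1 (by omega)
        have h4 := hAsc (a+d+1) (by omega) (by omega)
        exact lt_trans h3 h4
    intro a b h1 h2 h3
    have := key (b - a - 1) a h1 (by omega)
    rw [show a + (b-a-1) + 1 = b by omega] at this
    exact this
  -- position of the minimum
  have hu0 : u 0 = m := by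
    have h0 : (0:ℕ) < r*k+1 := by omega
    have hu0lt : u 0 < r*k+1 := hu_lt 0 h0
    have hw0 : w (u 0) = 0 := hwu 0 h0
    rcases lt_trichotomy (u 0) m with h | h | h
    · have := hMonoA (u 0) m h le_rfl
      omega
    · exact h
    · have := hMonoB m (u 0) le_rfl h (by omega)
      omega
  have hKey : ∀ p, p + 1 ≤ r*k → (u (p+1) < u p ↔ u (p+1) ≤ m) := by
    intro p hp
    have hup := hu_lt p (by omega)
    have hup1 := hu_lt (p+1) (by omega)
    have hwup : w (u p) = p := hwu p (by omega)
    have hwup1 : w (u (p+1)) = p+1 := hwu (p+1) (by omega)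
    constructor
    · intro h
      by_contra hcon
      push_neg at hcon
      have := hMonoB (u (p+1)) (u p) (by omega) h (by omega)
      omega
    · intro h
      rcases le_or_gt (u p) m with h2 | h2
      · rcases lt_trichotomy (u (p+1)) (u p) with h3 | h3 | h3
        · exact h3
        · rw [h3] at hwup1; omega
        · have := hMonoA (u p) (u (p+1)) h3 h
          omega
      · omega
  have hCD : ∀ p, p < r*k → (u (p+1) < u p ↔ p % r = 0) := by
    intro p hp
    have hlr : p % r < r := Nat.mod_lt p (by omega)
    have hd := Nat.div_add_mod p r
    obtain ⟨j, l, hl, rfl⟩ : ∃ j l, l < r ∧ p = r*j + l := ⟨p/r, p%r, hlr, by omega⟩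
    have hjk : j < k := by
      by_contra hcon
      have : r*k ≤ r*j := Nat.mul_le_mul_left _ (by omega)
      omega
    obtain ⟨hc1, hc2, hc3⟩ := hC j hjk
    have hml : (r*j+l) % r = l := md_mod j l hl
    rcases Nat.eq_zero_or_pos l with h0 | h0
    · subst h0
      constructor
      · intro _; omega
      · intro _; exact hc1
    · rcases eq_or_lt_of_le (Nat.succ_le_of_lt h0) with h1 | h1
      · constructor
        · intro hcon
          have : u (r*j+l) < u (r*j+l+1) := by
            rw [show r*j+l = r*j+1 by omega] at *
            exact lt_trans hc1 hc2
          omega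
        · intro hcon; omega
      · constructor
        · intro hcon
          have := hc3 l (by omega) hl
          omega
        · intro hcon; omega
  have hP1 : ∀ p, 1 ≤ p → p ≤ r*k → (u p ≤ m ↔ p % r = 1) := by
    intro p h1 h2
    obtain ⟨q, rfl⟩ : ∃ q, p = q + 1 := ⟨p - 1, by omega⟩
    rw [← hKey q (by omega), hCD q (by omega), mod_succ_iff hr]
  -- Q-positions
  have hQ0 : Qq r 0 = 0 := rfl
  have hQs : ∀ t, Qq r (t+1) = r*t+1 := by intro t; simp [Qq]
  have hQlt : ∀ t, t ≤ k → Qq r t < r*k+1 := by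
    intro t ht
    cases t with
    | zero => rw [hQ0]; omega
    | succ t =>
      rw [hQs]
      have h1 : r*(t+1) ≤ r*k := Nat.mul_le_mul_left _ (by omega)
      have h2 : r*(t+1) = r*t + r := by ring
      omega
  have hfA : ∀ t, t ≤ k → u (Qq r t) ≤ m := by
    intro t ht
    cases t with
    | zero => rw [hQ0, hu0]
    | succ t =>
      rw [hQs]
      have h1 : r*(t+1) ≤ r*k := Nat.mul_le_mul_left _ (by omega)
      have h2 : r*(t+1) = r*t + r := by ring
      exact (hP1 (r*t+1) (by omega) (by omega)).mpr (md_mod t 1 (by omega))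
  have hQmono : ∀ t, Qq r t < Qq r (t+1) := by
    intro t
    cases t with
    | zero => rw [hQ0, hQs]; omega
    | succ t =>
      rw [hQs, hQs]
      have h2 : r*(t+1) = r*t + r := by ring
      omega
  have hfDec : ∀ t, t < k → u (Qq r (t+1)) < u (Qq r t) := by
    intro t ht
    have hA1 := hfA t (by omega)
    have hA2 := hfA (t+1) (by omega)
    have hq1 := hQlt t (by omega)
    have hq2 := hQlt (t+1) (by omega)
    have hwq1 : w (u (Qq r t)) = Qq r t := hwu _ hq1
    have hwq2 : w (u (Qq r (t+1))) = Qq r (t+1) := hwu _ hq2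
    have hqm := hQmono t
    rcases lt_trichotomy (u (Qq r (t+1))) (u (Qq r t)) with h | h | h
    · exact h
    · rw [h] at hwq2; omega
    · have := hMonoA (u (Qq r t)) (u (Qq r (t+1))) h hA2
      omega
  have hfLB : ∀ s, s ≤ k → s ≤ u (Qq r (k - s)) := by
    intro s
    induction s with
    | zero => intro _; omega
    | succ s ih =>
      intro hs
      have h1 := hfDec (k - (s+1)) (by omega)
      rw [show k - (s+1) + 1 = k - s by omega] at h1
      have h2 := ih (by omega)
      omega
  have hmk : m = k := by
    have hge : k ≤ m := by
      have := hfLB k le_rfl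
      rw [show k - k = 0 by omega, hQ0, hu0] at this
      exact this
    have hgB : ∀ t, t < r*k - k → m < u (Pp r t) := by
      intro t ht
      have h1 : Pp r t ≤ r*k := Pp_lt hr t ht
      have h2 : 1 ≤ Pp r t := by unfold Pp; omega
      have h3 := Pp_mod_ne_one hr t
      have h4 := hP1 (Pp r t) h2 h1
      by_contra hcon
      push_neg at hcon
      exact h3 (h4.mp hcon)
    have hgInc : ∀ t, t + 1 < r*k - k → u (Pp r t) < u (Pp r (t+1)) := by
      intro t ht
      have hb1 := hgB t (by omega)
      have hb2 := hgB (t+1) ht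
      have hl1 : Pp r t ≤ r*k := Pp_lt hr t (by omega)
      have hl2 : Pp r (t+1) ≤ r*k := Pp_lt hr (t+1) ht
      have hwp1 : w (u (Pp r t)) = Pp r t := hwu _ (by omega)
      have hwp2 : w (u (Pp r (t+1))) = Pp r (t+1) := hwu _ (by omega)
      have hpm := Pp_mono hr t
      have hu2 := hu_lt (Pp r (t+1)) (by omega)
      rcases lt_trichotomy (u (Pp r t)) (u (Pp r (t+1))) with h | h | h
      · exact h
      · rw [h] at hwp1; omega
      · have := hMonoB (u (Pp r (t+1))) (u (Pp r t)) (by omega) h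
          (by have := hu_lt (Pp r t) (by omega); omega)
        omega
    have hgLB : ∀ t, t < r*k - k → m + 1 + t ≤ u (Pp r t) := by
      intro t
      induction t with
      | zero => intro ht; have := hgB 0 ht; omega
      | succ t ih =>
        intro ht
        have h1 := ih (by omega)
        have h2 := hgInc t ht
        omega
    have hle : m ≤ k := by
      have h1 := hgLB (r*k - k - 1) (by omega)
      have h3 := Pp_lt (k := k) hr (r*k - k - 1) (by omega)
      have h2 := hu_lt (Pp r (r*k - k - 1)) (by omega)
      omega
    omega
  -- full determination on Q positions
  have hfUB : ∀ t, t ≤ k → u (Qq r t) ≤ k - t := by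
    intro t
    induction t with
    | zero => intro _; rw [hQ0, hu0]; omega
    | succ t ih =>
      intro ht
      have h1 := ih (by omega)
      have h2 := hfDec t (by omega)
      omega
  have hfEq : ∀ t, t ≤ k → u (Qq r t) = k - t := by
    intro t ht
    have h1 := hfUB t ht
    have h2 := hfLB (k - t) (by omega)
    rw [show k - (k - t) = t by omega] at h2
    omega
  -- full determination on P positions (with m = k)
  have hgB : ∀ t, t < r*k - k → k < u (Pp r t) := by
    intro t ht
    have h1 : Pp r t ≤ r*k := Pp_lt hr t ht
    have h2 : 1 ≤ Pp r t := by unfold Pp; omega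
    have h3 := Pp_mod_ne_one hr t
    have h4 := hP1 (Pp r t) h2 h1
    by_contra hcon
    push_neg at hcon
    exact h3 (h4.mp (by omega))
  have hgInc : ∀ t, t + 1 < r*k - k → u (Pp r t) < u (Pp r (t+1)) := by
    intro t ht
    have hb1 := hgB t (by omega)
    have hb2 := hgB (t+1) ht
    have hl1 : Pp r t ≤ r*k := Pp_lt hr t (by omega)
    have hl2 : Pp r (t+1) ≤ r*k := Pp_lt hr (t+1) ht
    have hwp1 : w (u (Pp r t)) = Pp r t := hwu _ (by omega)
    have hwp2 : w (u (Pp r (t+1))) = Pp r (t+1) := hwu _ (by omega)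
    have hpm := Pp_mono hr t
    rcases lt_trichotomy (u (Pp r t)) (u (Pp r (t+1))) with h | h | h
    · exact h
    · rw [h] at hwp1; omega
    · have := hMonoB (u (Pp r (t+1))) (u (Pp r t)) (by omega) h
        (by have := hu_lt (Pp r t) (by omega); omega)
      omega
  have hgLB : ∀ t, t < r*k - k → k + 1 + t ≤ u (Pp r t) := by
    intro t
    induction t with
    | zero => intro ht; have := hgB 0 ht; omega
    | succ t ih =>
      intro ht
      have h1 := ih (by omega)
      have h2 := hgInc t ht
      omega
  have hgUB : ∀ s, s < r*k - k → u (Pp r (r*k - k - 1 - s)) ≤ k + 1 + (r*k - k - 1 - s) := by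
    intro s
    induction s with
    | zero =>
      intro hs
      rw [Nat.sub_zero]
      have h3 := Pp_lt (k := k) hr (r*k - k - 1) (by omega)
      have h2 := hu_lt (Pp r (r*k - k - 1)) (by omega)
      omega
    | succ s ih =>
      intro hs
      have h1 := ih (by omega)
      have h2 := hgInc (r*k - k - 1 - (s+1)) (by rw [show r*k-k-1-(s+1)+1 = r*k-k-1-s by omega]; omega)
      rw [show r*k-k-1-(s+1)+1 = r*k-k-1-s by omega] at h2
      omega
  have hgEq : ∀ t, t < r*k - k → u (Pp r t) = k + 1 + t := by
    intro t ht
    have h1 := hgLB t ht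
    have h2 := hgUB (r*k - k - 1 - t) (by omega)
    rw [show r*k-k-1-(r*k-k-1-t) = t by omega] at h2
    omega
  -- conclusion 1: u is determined
  constructor
  · intro p hp
    rcases Nat.eq_zero_or_pos p with h0 | h0
    · subst h0
      rw [hu0, hmk, s0_zero hr]
    rcases eq_or_ne (p % r) 1 with h1 | h1
    · have hd := Nat.div_add_mod p r
      obtain ⟨j, hj⟩ : ∃ j, p = r*j+1 := ⟨p/r, by omega⟩
      have hjk : j < k := by
        by_contra hcon
        have : r*k ≤ r*j := Nat.mul_le_mul_left _ (by omega)
        omega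
      have := hfEq (j+1) (by omega)
      rw [hQs] at this
      rw [hj, this, s0_mod1 hr]
      omega
    · obtain ⟨t, ht, rfl⟩ := Pp_cover (k := k) hr p h0 (by omega) h1
      rw [hgEq t ht, sP hr]
  -- conclusion 2: the descent set
  · ext i
    simp only [Finset.mem_filter, Finset.mem_range]
    constructor
    · rintro ⟨h1, h2⟩
      by_contra hcon
      push_neg at hcon
      have := hAsc i (by omega) h1
      omega
    · intro h
      exact ⟨by omega, hD i (by omega)⟩

end Uniqueness

section Final

lemma ofPerm_lt' {n : ℕ} (π : Equiv.Perm (Fin n)) (p : ℕ) (hp : p < n) :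
    ofPerm π p < n := by
  unfold ofPerm
  rw [dif_pos hp]
  exact (π ⟨p, hp⟩).isLt

lemma ofPerm_inv_apply {n : ℕ} (π : Equiv.Perm (Fin n)) (p : ℕ) (hp : p < n) :
    ofPerm π (ofPerm π⁻¹ p) = p := by
  have h1 : ofPerm π⁻¹ p < n := ofPerm_lt' π⁻¹ p hp
  show (if h : ofPerm π⁻¹ p < n then ((π ⟨ofPerm π⁻¹ p, h⟩ : Fin n) : ℕ) else 0) = p
  rw [dif_pos h1]
  have e : (⟨ofPerm π⁻¹ p, h1⟩ : Fin n) = π⁻¹ ⟨p, hp⟩ := by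
    apply Fin.ext
    show ofPerm π⁻¹ p = _
    unfold ofPerm
    rw [dif_pos hp]
  rw [e]
  simp

lemma main_perm {r k : ℕ} (hr : 2 ≤ r) (hk : 1 ≤ k) (π : Equiv.Perm (Fin (r*k+1)))
    (hC : IsCluster r k (ofPerm π⁻¹)) (hP : pkNum (r*k+1) (ofPerm π) = 0) :
    (∀ p, p < r*k+1 → ofPerm π⁻¹ p = s0 r k p) ∧ desNum (r*k+1) (ofPerm π) = k := by
  have hpk : ∀ i, 1 ≤ i → i < r*k →
      ¬(ofPerm π (i-1) < ofPerm π i ∧ ofPerm π (i+1) < ofPerm π i) := by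
    intro i h1 h2 hcon
    have hmem : i ∈ (Finset.Ico 1 (r*k+1-1)).filter
        (fun i => ofPerm π (i-1) < ofPerm π i ∧ ofPerm π (i+1) < ofPerm π i) := by
      rw [Finset.mem_filter, Finset.mem_Ico]
      exact ⟨⟨h1, by omega⟩, hcon⟩
    unfold pkNum at hP
    rw [Finset.card_eq_zero] at hP
    rw [hP] at hmem
    exact absurd hmem (Finset.notMem_empty i)
  have h := main_words hr hk (ofPerm π) (ofPerm π⁻¹)
    (fun p hp => ofPerm_lt' π p hp) (fun p hp => ofPerm_lt' π⁻¹ p hp)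
    (fun p hp => ofPerm_inv_apply π p hp)
    (fun p hp => by have := ofPerm_inv_apply π⁻¹ p hp; rwa [inv_inv] at this)
    hC hpk
  refine ⟨h.1, ?_⟩
  unfold desNum
  rw [show r*k+1-1 = r*k by omega, h.2, Finset.card_range]

end Final

/-- there is exactly one `π ∈ S_{rk+1}` whose inverse is a `2134⋯(r+1)`-cluster
and which has no peaks; moreover it has exactly `k` descents. -/
theorem stmt9 (r k : ℕ) (hr : 2 ≤ r) (hk : 1 ≤ k) :
    (∃! π : Equiv.Perm (Fin (r * k + 1)),
        IsCluster r k (ofPerm π⁻¹) ∧ pkNum (r * k + 1) (ofPerm π) = 0) ∧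
    (∀ π : Equiv.Perm (Fin (r * k + 1)),
        IsCluster r k (ofPerm π⁻¹) ∧ pkNum (r * k + 1) (ofPerm π) = 0 →
        desNum (r * k + 1) (ofPerm π) = k) := by
  obtain ⟨π₀, hs0, hC0, hP0⟩ := exists_good hr hk
  constructor
  · refine ⟨π₀, ⟨hC0, hP0⟩, ?_⟩
    rintro π ⟨hC, hP⟩
    have h := (main_perm hr hk π hC hP).1
    have hinv : π⁻¹ = π₀⁻¹ := by
      apply Equiv.ext
      intro x
      apply Fin.ext
      have e1 : ((π⁻¹ x : Fin (r*k+1)) : ℕ) = s0 r k x.1 := by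
        have h2 := h x.1 x.2
        unfold ofPerm at h2
        rw [dif_pos x.2] at h2
        simpa using h2
      have e2 : ((π₀⁻¹ x : Fin (r*k+1)) : ℕ) = s0 r k x.1 := by
        have h2 := hs0 x.1 x.2
        unfold ofPerm at h2
        rw [dif_pos x.2] at h2
        simpa using h2
      rw [e1, e2]
    exact inv_injective hinv
  · rintro π ⟨hC, hP⟩
    exact (main_perm hr hk π hC hP).2
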